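/- Let λ = (λ_0, λ_1, …, λ_n): F → Π_{i=0}^n R^{i+1}(F) be an A-linear map. For integers p > 0 and 0 ≤ q ≤ n, define s_q(λ) := Σ_{i_1+⋯+i_p = q} (i_p+1)(λ_{i_1}⋯λ_{i_p}): R^p(F) → R^{p+q}(F) and s̃_q(λ) := Σ_{i_1+⋯+i_p=q} (λ_{i_1}⋯λ_{i_p}): S^p(F) → S^{p+q}(F). Then for every element ω of K^p(F) := σ*(R^p(F)), the images in S^{p+q}(F) satisfy s_q(λ)(ω) = ((p+q)/p)·s̃_q(λ)(ω). -/

import Mathlib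

open scoped TensorProduct

noncomputable section

variable (A : Type) [CommRing A]
variable (F : Type) [AddCommGroup F] [Module A F]

/-- `n`-fold tensor power `T^n(F)`. -/
abbrev TPow (n : ℕ) := PiTensorProduct A (fun _ : Fin n => F)

/-- The submodule of symmetry relations. -/
def symRel (n : ℕ) : Submodule A (TPow A F n) :=
  Submodule.span A
    {x | ∃ (m : Fin n → F) (e : Equiv.Perm (Fin n)),
      x = PiTensorProduct.tprod A m - PiTensorProduct.tprod A (m ∘ e)}

/-- Symmetric power `S^n(F)`. -/
abbrev SymPow (n : ℕ) := TPow A F n ⧸ symRel A F n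

/-- Class of the word `m₀ ⋯ m_{n-1}` in `S^n(F)`. -/
def mkS {n : ℕ} (m : Fin n → F) : SymPow A F n :=
  Submodule.Quotient.mk (PiTensorProduct.tprod A m)

/-- Class of a list of elements of `F` in the symmetric power. -/
def mkSL (l : List F) : SymPow A F l.length := mkS A F l.get

/-- `RPow A F n` is `R^{n+1}(F) = S^n(F) ⊗_A F`. -/
abbrev RPow (n : ℕ) := SymPow A F n ⊗[A] F

/-- Class of the word `m₀ ⋯ m_n` in `R^{n+1}(F) = S^n(F) ⊗ F`. -/
def mkR {n : ℕ} (m : Fin (n + 1) → F) : RPow A F n :=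
  mkS A F (fun i : Fin n => m i.castSucc) ⊗ₜ[A] m (Fin.last n)

/-- The `i`-th "rotation" of the word `m` appearing in the definition of the
switch operator: `m_n m_{n-1} ⋯ m_{n-i+1} m_0 m_1 ⋯ m_{n-i}` (0-indexed). -/
def rot {n : ℕ} (m : Fin (n + 1) → F) (i : ℕ) : Fin (n + 1) → F := fun j =>
  if j.val < i then m ⟨n - j.val, by have := j.isLt; omega⟩
  else m ⟨j.val - i, by have := j.isLt; omega⟩

/-- `σ` is the switch operator on `R^{n+1}(F)`:
`σ(m_0⋯m_n) = ∑_{i=1}^{n} m_n m_{n-1}⋯m_{n-i+1} m_0 m_1 ⋯ m_{n-i}`. -/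
def IsSwitch (n : ℕ) (σ : RPow A F n →ₗ[A] RPow A F n) : Prop :=
  ∀ m : Fin (n + 1) → F,
    σ (mkR A F m) = ∑ i ∈ Finset.Icc 1 n, mkR A F (rot F m i)

/-- `K^{n+1}(F) = σ*(R^{n+1}(F))`, described by its generators `σ*(m_0⋯m_n)`. -/
def KSub (n : ℕ) : Submodule A (RPow A F n) :=
  Submodule.span A
    {x | ∃ m : Fin (n + 1) → F,
      x = mkR A F m + ∑ i ∈ Finset.Icc 1 n, mkR A F (rot F m i)}

/-- `K²(F) ⊆ T²(F) = F ⊗ F`: the kernel of `T²(F) → Λ²(F)`, i.e. the image of `1 + σ`. -/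
def K2Sub : Submodule A (F ⊗[A] F) :=
  Submodule.span A {x | ∃ u v : F, x = u ⊗ₜ[A] v + v ⊗ₜ[A] u}

/-- The word `m₀ ⋯ m_{p-1} u m'₀ ⋯ m'_{q-1}`. -/
def joinWord {p q : ℕ} (m : Fin p → F) (u : F) (m' : Fin q → F) :
    Fin (p + q + 1) → F := fun j =>
  if h : j.val < p then m ⟨j.val, h⟩
  else if _h2 : j.val < p + 1 then u
  else m' ⟨j.val - (p + 1), by have := j.isLt; omega⟩

/-- The concatenated word `m₀ ⋯ m_{p-1} m'₀ ⋯ m'_{q-1}`. -/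
def appendWord {p q : ℕ} (m : Fin p → F) (m' : Fin q → F) : Fin (p + q) → F := fun j =>
  if h : j.val < p then m ⟨j.val, h⟩
  else m' ⟨j.val - p, by have := j.isLt; omega⟩

/-- `mul` is the multiplication `R^{p+1}(F) × R^{q+1}(F) → R^{p+q+2}(F)` of the graded
algebra `R(F)`, recorded with values in `∏ₖ R^{k+1}(F)`:
`(s ⊗ u)·(s' ⊗ v) = (s u s') ⊗ v`. -/
def IsMulR (mul : ∀ p q, RPow A F p →ₗ[A] RPow A F q →ₗ[A] ∀ k, RPow A F k) : Prop :=
  ∀ (p q : ℕ) (m : Fin p → F) (u : F) (m' : Fin q → F) (v : F),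
    mul p q (mkS A F m ⊗ₜ[A] u) (mkS A F m' ⊗ₜ[A] v)
      = Pi.single (p + q + 1) (mkS A F (joinWord F m u m') ⊗ₜ[A] v)

/-- `mul` is the multiplication `S^p(F) × S^q(F) → S^{p+q}(F)` of the symmetric algebra,
recorded with values in `∏ₖ S^k(F)`. -/
def IsMulS (mul : ∀ p q, SymPow A F p →ₗ[A] SymPow A F q →ₗ[A] ∀ k, SymPow A F k) : Prop :=
  ∀ (p q : ℕ) (m : Fin p → F) (m' : Fin q → F),
    mul p q (mkS A F m) (mkS A F m') = Pi.single (p + q) (mkS A F (appendWord F m m'))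

/-- `π` is the family of natural maps `R^{n+1}(F) = S^n(F) ⊗ F → S^{n+1}(F)`. -/
def IsPi (π : ∀ n, RPow A F n →ₗ[A] SymPow A F (n + 1)) : Prop :=
  ∀ (n : ℕ) (m : Fin n → F) (v : F),
    π n (mkS A F m ⊗ₜ[A] v) = mkS A F (Fin.snoc m v)

/-- `T = (T₀, T₁, …)` is a (full) extended `D`-connection:  `T₀ = id_F` (under
`F ≅ R¹(F)`), and `T_i(am) = a T_i(m) + ∑_{j=1}^i (1/j) T_{j-1}(D a) T_{i-j}(m)`. -/
def IsExtConn [Algebra ℚ A] (D : A → F)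
    (mul : ∀ p q, RPow A F p →ₗ[A] RPow A F q →ₗ[A] ∀ k, RPow A F k)
    (T : ∀ i, F →+ RPow A F i) : Prop :=
  (∀ m : F, T 0 m = mkS A F (fun i : Fin 0 => i.elim0) ⊗ₜ[A] m) ∧
  ∀ (i : ℕ), 1 ≤ i → ∀ (a : A) (m : F),
    Pi.single i (T i (a • m))
      = Pi.single i (a • T i m)
        + ∑ j ∈ Finset.Icc 1 i,
            algebraMap ℚ A (1 / (j : ℚ)) •
              mul (j - 1) (i - j) (T (j - 1) (D a)) (T (i - j) m)

/-- `T = (T₀, …, T_N)` is an extended `D`-connection up to order `N`. -/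
def IsExtConnTo [Algebra ℚ A] (D : A → F)
    (mul : ∀ p q, RPow A F p →ₗ[A] RPow A F q →ₗ[A] ∀ k, RPow A F k)
    (N : ℕ) (T : ∀ i, F →+ RPow A F i) : Prop :=
  (∀ m : F, T 0 m = mkS A F (fun i : Fin 0 => i.elim0) ⊗ₜ[A] m) ∧
  ∀ (i : ℕ), 1 ≤ i → i ≤ N → ∀ (a : A) (m : F),
    Pi.single i (T i (a • m))
      = Pi.single i (a • T i m)
        + ∑ j ∈ Finset.Icc 1 i,
            algebraMap ℚ A (1 / (j : ℚ)) •
              mul (j - 1) (i - j) (T (j - 1) (D a)) (T (i - j) m)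

/-- The wedge map `F ⊗_A F →  Λ(F)`, `u ⊗ v ↦ u ∧ v`; an element of `F ⊗ F` maps to
zero in `Λ²(F)` iff its image under this map is zero. -/
def wedgeMap : F ⊗[A] F →ₗ[A] ExteriorAlgebra A F :=
  TensorProduct.lift
    ((LinearMap.mul A (ExteriorAlgebra A F)).compl₁₂ (ExteriorAlgebra.ι A) (ExteriorAlgebra.ι A))


/-- The word of letters of the product `λ_{i₁}(m₁) ⋯ λ_{i_{p+1}}(m_{p+1})` in `R(F)`,
minus its final letter. -/
def bigWord {p : ℕ} {d : Fin (p + 1) → ℕ} (m : ∀ j, Fin (d j) → F)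
    (v : Fin (p + 1) → F) : List F :=
  ((List.ofFn fun j : Fin (p + 1) => List.ofFn (m j) ++ [v j]).flatten).dropLast

/-- The full word of letters of a product of elements of `R₊(F)`, fully symmetrized. -/
def fullWord {p : ℕ} {d : Fin p → ℕ} (m : ∀ j, Fin (d j) → F)
    (v : Fin p → F) : List F :=
  (List.ofFn fun j : Fin p => List.ofFn (m j) ++ [v j]).flatten

/-- `P` is the family of `(p+1)`-fold products `R^{d₁+1} × ⋯ × R^{d_{p+1}+1} → R(F)`:
`(s₁⊗v₁, …) ↦ (s₁v₁s₂v₂⋯s_{p+1}) ⊗ v_{p+1}`. -/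
def IsMultiProdR
    (P : ∀ (p : ℕ) (d : Fin (p + 1) → ℕ),
      MultilinearMap A (fun j : Fin (p + 1) => RPow A F (d j)) (∀ k, RPow A F k)) :
    Prop :=
  ∀ (p : ℕ) (d : Fin (p + 1) → ℕ) (m : ∀ j, Fin (d j) → F) (v : Fin (p + 1) → F),
    P p d (fun j => mkS A F (m j) ⊗ₜ[A] v j)
      = Pi.single (bigWord F m v).length
          (mkSL A F (bigWord F m v) ⊗ₜ[A] v (Fin.last p))

/-- `P` is the family of `p`-fold products with values in the symmetric algebra:
the image in `S(F)` of a product of elements of `R₊(F)`. -/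
def IsMultiProdS
    (P : ∀ (p : ℕ) (d : Fin p → ℕ),
      MultilinearMap A (fun j : Fin p => RPow A F (d j)) (∀ k, SymPow A F k)) : Prop :=
  ∀ (p : ℕ) (d : Fin p → ℕ) (m : ∀ j, Fin (d j) → F) (v : Fin p → F),
    P p d (fun j => mkS A F (m j) ⊗ₜ[A] v j)
      = Pi.single (fullWord F m v).length (mkSL A F (fullWord F m v))

/-- `s` is the operator `s_q(λ) : R^{p+1}(F) → R^{p+q+1}(F)`,
`s_q(λ) = ∑_{i₁+⋯+i_{p+1}=q} (i_{p+1}+1)(λ_{i₁} ⋯ λ_{i_{p+1}})`. -/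
def IsSq
    (P : ∀ (p : ℕ) (d : Fin (p + 1) → ℕ),
      MultilinearMap A (fun j : Fin (p + 1) => RPow A F (d j)) (∀ k, RPow A F k))
    (lam : ∀ i, F →ₗ[A] RPow A F i) (p q : ℕ)
    (s : RPow A F p →ₗ[A] ∀ k, RPow A F k) : Prop :=
  ∀ m : Fin (p + 1) → F,
    s (mkR A F m)
      = ∑ d ∈ Finset.Nat.antidiagonalTuple (p + 1) q,
          (d (Fin.last p) + 1) • P p d (fun j => lam (d j) (m j))

/-- `s` is the operator `s̃_q(λ) : S^p(F) → S^{p+q}(F)`,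
`s̃_q(λ) = ∑_{i₁+⋯+i_p=q} (λ_{i₁} ⋯ λ_{i_p})`. -/
def IsSqTilde
    (P : ∀ (p : ℕ) (d : Fin p → ℕ),
      MultilinearMap A (fun j : Fin p => RPow A F (d j)) (∀ k, SymPow A F k))
    (lam : ∀ i, F →ₗ[A] RPow A F i) (p q : ℕ)
    (s : SymPow A F p →ₗ[A] ∀ k, SymPow A F k) : Prop :=
  ∀ m : Fin p → F,
    s (mkS A F m)
      = ∑ d ∈ Finset.Nat.antidiagonalTuple p q,
          P p d (fun j => lam (d j) (m j))

/-!
A generator `σ*(m₁⋯m_p) = ∑ᵣ rotᵣ(m)` of `K^p(F)` is a sum of `p` words that are permutations of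
each other, so its image in `S^p(F)` is `p·m₁⋯m_p`. In `S(F)` the product
`λ_{i₁}(m₁)⋯λ_{i_p}(m_p)` only depends on the multiset of pairs `(i_j, m_j)`; reindexing the sum
over `i₁ + ⋯ + i_p = q` along the `r`-th rotation turns the weight `i_p + 1` into
`i_{p-r} + 1`, and summing over `r` gives every tuple the weight `∑ⱼ (i_j + 1) = p + q`.
-/

theorem mkS_comp_perm {n : ℕ} (m : Fin n → F) (e : Equiv.Perm (Fin n)) :
    mkS A F (m ∘ e) = mkS A F m := by
  rw [mkS, mkS, Submodule.Quotient.eq, ← neg_mem_iff, neg_sub]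
  exact Submodule.subset_span ⟨m, e, rfl⟩

theorem single_mkS_comp_finEquiv {a b : ℕ} (e : Fin a ≃ Fin b) (m : Fin b → F) :
    (Pi.single a (mkS A F (m ∘ e)) : ∀ k, SymPow A F k) = Pi.single b (mkS A F m) := by
  obtain rfl := Fin.equiv_iff_eq.mp ⟨e⟩
  rw [mkS_comp_perm]

theorem single_mkSL_of_perm {l₁ l₂ : List F} (h : l₁.Perm l₂) :
    (Pi.single l₁.length (mkSL A F l₁) : ∀ k, SymPow A F k)
      = Pi.single l₂.length (mkSL A F l₂) := by
  classical
  let e : Fin l₁.length ≃ Fin l₂.length :=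
    Equiv.ofBijective h.idxBij ⟨h.idxBij_injective, h.idxBij_surjective⟩
  have he : l₁.get = l₂.get ∘ e := funext fun i => (h.getElem_idxBij_eq_getElem i).symm
  rw [mkSL, mkSL, he, single_mkS_comp_finEquiv]

theorem single_mkSL_append_singleton (l : List F) (a : F) :
    (Pi.single (l ++ [a]).length (mkSL A F (l ++ [a])) : ∀ k, SymPow A F k)
      = Pi.single (l.length + 1) (mkS A F (Fin.snoc l.get a)) := by
  have he : (l ++ [a]).get = Fin.snoc l.get a ∘ finCongr (by simp) := by
    funext j
    obtain ⟨j, hj⟩ := j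
    simp only [List.length_append, List.length_singleton] at hj
    rcases Nat.lt_or_ge j l.length with h | h
    · simp [List.getElem_append_left h, Fin.snoc, h]
    · simp [List.getElem_append_right h, Fin.snoc, show ¬ j < l.length by omega]
  rw [mkSL, he, single_mkS_comp_finEquiv]

theorem span_range_mkS (n : ℕ) :
    Submodule.span A (Set.range (mkS A F : (Fin n → F) → SymPow A F n)) = ⊤ := by
  have : Set.range (mkS A F : (Fin n → F) → SymPow A F n)
      = (symRel A F n).mkQ '' Set.range (PiTensorProduct.tprod A) := by
    rw [← Set.range_comp]; rfl
  rw [this, Submodule.span_image, PiTensorProduct.span_tprod_eq_top, Submodule.map_top,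
    Submodule.range_mkQ]

theorem span_range_mkS_tmul (n : ℕ) :
    Submodule.span A (Set.range fun x : (Fin n → F) × F => mkS A F x.1 ⊗ₜ[A] x.2) = ⊤ := by
  have : (Set.range fun x : (Fin n → F) × F => mkS A F x.1 ⊗ₜ[A] x.2)
      = Set.image2 (fun s v => TensorProduct.mk A _ F s v) (Set.range (mkS A F)) Set.univ := by
    ext; simp
  rw [this, ← Submodule.map₂_span_span, span_range_mkS, Submodule.span_univ,
    TensorProduct.map₂_mk_top_top_eq_top]

theorem multilinearMap_ext_mkS_tmul {p : ℕ} {d : Fin p → ℕ} {N : Type*} [AddCommGroup N]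
    [Module A N] {f g : MultilinearMap A (fun j => RPow A F (d j)) N}
    (h : ∀ (w : ∀ j, Fin (d j) → F) (v : Fin p → F),
      f (fun j => mkS A F (w j) ⊗ₜ[A] v j) = g (fun j => mkS A F (w j) ⊗ₜ[A] v j)) :
    f = g :=
  MultilinearMap.ext_of_span_eq_top
    (g := fun j (x : (Fin (d j) → F) × F) => mkS A F x.1 ⊗ₜ[A] x.2)
    (fun j => span_range_mkS_tmul A F (d j)) fun x => h (fun j => (x j).1) (fun j => (x j).2)

section Words

variable {α : Type}

theorem fullWord_comp_perm {p : ℕ} {d : Fin p → ℕ} (w : ∀ j, Fin (d j) → α) (v : Fin p → α)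
    (e : Equiv.Perm (Fin p)) :
    (fullWord α (fun j => w (e j)) (v ∘ e)).Perm (fullWord α w v) := by
  have h := (Equiv.Perm.ofFn_comp_perm e fun j => List.ofFn (w j) ++ [v j]).flatMap_right id
  rwa [List.flatMap_id, List.flatMap_id] at h

theorem fullWord_eq_bigWord_append {p : ℕ} {d : Fin (p + 1) → ℕ} (w : ∀ j, Fin (d j) → α)
    (v : Fin (p + 1) → α) : fullWord α w v = bigWord α w v ++ [v (Fin.last p)] := by
  have hne : fullWord α w v ≠ [] := by simp [fullWord]
  have hlast : (fullWord α w v).getLast hne = v (Fin.last p) := by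
    simp only [fullWord, List.ofFn_succ', List.concat_eq_append, List.flatten_append]
    simp
  change _ = (fullWord α w v).dropLast ++ _
  rw [← hlast, List.dropLast_append_getLast]

end Words

def rotPerm {n : ℕ} (i : Fin (n + 1)) : Equiv.Perm (Fin (n + 1)) :=
  Equiv.ofBijective
    (fun j => if j.val < i.val then ⟨n - j.val, by omega⟩ else ⟨j.val - i.val, by omega⟩)
    (Finite.injective_iff_bijective.mp fun a b h => by
      split_ifs at h <;> rw [Fin.mk.injEq] at h <;> ext <;> omega)

section Rotations

variable {α : Type}

theorem rot_eq_comp_rotPerm {n : ℕ} (m : Fin (n + 1) → α) (i : Fin (n + 1)) :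
    rot α m i = m ∘ rotPerm i := by
  funext j
  simp only [rot, rotPerm, Function.comp_apply, Equiv.ofBijective_apply]
  split_ifs <;> rfl

theorem rotPerm_last {n : ℕ} (i : Fin (n + 1)) : rotPerm i (Fin.last n) = i.rev := by
  ext
  simp only [rotPerm, Equiv.ofBijective_apply, Fin.val_last, Fin.val_rev]
  rw [if_neg (by omega)]
  simp

theorem rot_zero {n : ℕ} (m : Fin (n + 1) → α) : rot α m 0 = m := by
  funext j
  simp [rot]

end Rotations

theorem mkR_add_sum_rot {n : ℕ} (m : Fin (n + 1) → F) :
    mkR A F m + ∑ i ∈ Finset.Icc 1 n, mkR A F (rot F m i)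
      = ∑ i : Fin (n + 1), mkR A F (rot F m i) := by
  rw [Fin.sum_univ_eq_sum_range (fun i => mkR A F (rot F m i)), Finset.range_eq_Ico,
    Finset.sum_eq_sum_Ico_succ_bot (Nat.succ_pos n), rot_zero]
  rfl

theorem Pi.single_succ_apply_succ {M : ℕ → Type*} [∀ k, Zero (M k)] (i j : ℕ) (x : M (i + 1)) :
    (Pi.single (i + 1) x : ∀ k, M k) (j + 1) = (Pi.single i x : ∀ k, M (k + 1)) j := by
  by_cases h : j = i
  · subst h; simp
  · simp [Pi.single_eq_of_ne, h]

theorem Finset.Nat.sum_antidiagonalTuple_comp_perm {M : Type*} [AddCommMonoid M] {k : ℕ} (q : ℕ)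
    (e : Equiv.Perm (Fin k)) (g : (Fin k → ℕ) → M) :
    ∑ d ∈ Finset.Nat.antidiagonalTuple k q, g (d ∘ e)
      = ∑ d ∈ Finset.Nat.antidiagonalTuple k q, g d := by
  refine Finset.sum_nbij' (· ∘ e) (· ∘ e.symm) (fun d hd => ?_) (fun d hd => ?_)
    (fun d _ => by simp [Function.comp_assoc]) (fun d _ => by simp [Function.comp_assoc])
    (fun _ _ => rfl)
  all_goals
    rw [Finset.Nat.mem_antidiagonalTuple] at hd ⊢
    exact (Equiv.sum_comp _ d).trans hd

theorem Finset.Nat.sum_rev_add_one_of_mem_antidiagonalTuple {n q : ℕ} {d : Fin (n + 1) → ℕ}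
    (hd : d ∈ Finset.Nat.antidiagonalTuple (n + 1) q) :
    ∑ i : Fin (n + 1), (d i.rev + 1) = q + (n + 1) := by
  rw [Finset.Nat.mem_antidiagonalTuple] at hd
  rw [Finset.sum_add_distrib, ← hd]
  simp only [← Fin.revPerm_apply, Equiv.sum_comp, Finset.sum_const, Finset.card_univ,
    Fintype.card_fin, smul_eq_mul, mul_one]

section Products

variable {A F}
variable {lam : ∀ i, F →ₗ[A] RPow A F i}
  {P : ∀ (p : ℕ) (d : Fin (p + 1) → ℕ),
    MultilinearMap A (fun j : Fin (p + 1) => RPow A F (d j)) (∀ k, RPow A F k)}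
  {PS : ∀ (p : ℕ) (d : Fin p → ℕ),
    MultilinearMap A (fun j : Fin p => RPow A F (d j)) (∀ k, SymPow A F k)}
  {π : ∀ k, RPow A F k →ₗ[A] SymPow A F (k + 1)}

namespace IsMultiProdS

theorem apply_comp_perm (hPS : IsMultiProdS A F PS) {p : ℕ} (d : Fin p → ℕ)
    (e : Equiv.Perm (Fin p)) (y : ∀ j, RPow A F (d j)) :
    PS p (d ∘ e) (fun j => y (e j)) = PS p d y := by
  let PS' : MultilinearMap A (fun j => RPow A F (d j)) (∀ k, SymPow A F k) :=
    (MultilinearMap.domDomCongrLinearEquiv' A A (fun j => RPow A F (d j)) _ e.symm).symm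
      (PS p (d ∘ e))
  suffices PS' = PS p d from congrArg (· y) this
  refine multilinearMap_ext_mkS_tmul A F fun w v => ?_
  change PS p (d ∘ e) (fun j => mkS A F (w (e j)) ⊗ₜ[A] v (e j)) = _
  rw [hPS, hPS]
  exact single_mkSL_of_perm A F (fullWord_comp_perm w v e)

theorem sum_smul_apply_comp_perm (hPS : IsMultiProdS A F PS) {n : ℕ} (q : ℕ)
    (c : (Fin n → ℕ) → ℕ) (m : Fin n → F) (e : Equiv.Perm (Fin n)) :
    ∑ d ∈ Finset.Nat.antidiagonalTuple n q, c d • PS n d (fun j => lam (d j) (m (e j)))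
      = ∑ d ∈ Finset.Nat.antidiagonalTuple n q,
          c (d ∘ e) • PS n d (fun j => lam (d j) (m j)) := by
  rw [← Finset.Nat.sum_antidiagonalTuple_comp_perm q e]
  refine Finset.sum_congr rfl fun d _ => ?_
  rw [← hPS.apply_comp_perm d e]
  rfl

end IsMultiProdS

namespace IsPi

theorem apply_mkR (hπ : IsPi A F π) {n : ℕ} (m : Fin (n + 1) → F) :
    π n (mkR A F m) = mkS A F m := by
  rw [mkR, hπ]
  exact congrArg _ (Fin.snoc_init_self m)

theorem apply_multiProd (hπ : IsPi A F π) (hP : IsMultiProdR A F P)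
    (hPS : IsMultiProdS A F PS) {n : ℕ} (d : Fin (n + 1) → ℕ) (k : ℕ)
    (y : ∀ j, RPow A F (d j)) :
    π k (P n d y k) = PS (n + 1) d y (k + 1) := by
  suffices ((π k).comp (LinearMap.proj k)).compMultilinearMap (P n d)
      = (LinearMap.proj (k + 1)).compMultilinearMap (PS (n + 1) d) from
    congrArg (· y) this
  refine multilinearMap_ext_mkS_tmul A F fun w v => ?_
  simp only [LinearMap.compMultilinearMap_apply, LinearMap.comp_apply, LinearMap.proj_apply]
  rw [hP, hPS, Pi.apply_single (fun i => π i) (fun i => map_zero _), mkSL, hπ,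
    fullWord_eq_bigWord_append, single_mkSL_append_singleton, Pi.single_succ_apply_succ]

theorem apply_sum_rot (hπ : IsPi A F π) {n : ℕ} (m : Fin (n + 1) → F) :
    π n (∑ i : Fin (n + 1), mkR A F (rot F m i)) = (n + 1) • mkS A F m := by
  simp only [map_sum, hπ.apply_mkR, rot_eq_comp_rotPerm, mkS_comp_perm, Finset.sum_const,
    Finset.card_univ, Fintype.card_fin]

end IsPi

namespace IsSq

theorem pi_apply_mkR (hP : IsMultiProdR A F P) (hPS : IsMultiProdS A F PS)
    (hπ : IsPi A F π) {n q : ℕ} {s : RPow A F n →ₗ[A] ∀ k, RPow A F k}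
    (hs : IsSq A F P lam n q s) (m : Fin (n + 1) → F) (k : ℕ) :
    π k (s (mkR A F m) k) = (∑ d ∈ Finset.Nat.antidiagonalTuple (n + 1) q,
      (d (Fin.last n) + 1) • PS (n + 1) d (fun j => lam (d j) (m j))) (k + 1) := by
  rw [hs m]
  simp only [Finset.sum_apply, Pi.smul_apply, map_sum, map_nsmul, hπ.apply_multiProd hP hPS]

theorem pi_apply_sum_rot (hP : IsMultiProdR A F P) (hPS : IsMultiProdS A F PS)
    (hπ : IsPi A F π) {n q : ℕ} {s : RPow A F n →ₗ[A] ∀ k, RPow A F k}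
    (hs : IsSq A F P lam n q s) (m : Fin (n + 1) → F) (k : ℕ) :
    π k (s (∑ i : Fin (n + 1), mkR A F (rot F m i)) k) = (q + (n + 1)) •
      (∑ d ∈ Finset.Nat.antidiagonalTuple (n + 1) q,
        PS (n + 1) d (fun j => lam (d j) (m j))) (k + 1) := by
  have hsum : ∑ i : Fin (n + 1), ∑ d ∈ Finset.Nat.antidiagonalTuple (n + 1) q,
        (d (Fin.last n) + 1) • PS (n + 1) d (fun j => lam (d j) (rot F m i j))
      = (q + (n + 1)) • ∑ d ∈ Finset.Nat.antidiagonalTuple (n + 1) q,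
          PS (n + 1) d (fun j => lam (d j) (m j)) :=
    calc ∑ i : Fin (n + 1), ∑ d ∈ Finset.Nat.antidiagonalTuple (n + 1) q,
          (d (Fin.last n) + 1) • PS (n + 1) d (fun j => lam (d j) (rot F m i j))
        = ∑ i : Fin (n + 1), ∑ d ∈ Finset.Nat.antidiagonalTuple (n + 1) q,
            (d i.rev + 1) • PS (n + 1) d (fun j => lam (d j) (m j)) := by
          refine Finset.sum_congr rfl fun i _ => ?_
          simp only [rot_eq_comp_rotPerm, Function.comp_apply,
            hPS.sum_smul_apply_comp_perm q (fun d => d (Fin.last n) + 1), rotPerm_last]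
      _ = ∑ d ∈ Finset.Nat.antidiagonalTuple (n + 1) q,
            (q + (n + 1)) • PS (n + 1) d (fun j => lam (d j) (m j)) := by
          rw [Finset.sum_comm]
          refine Finset.sum_congr rfl fun d hd => ?_
          rw [← Finset.sum_smul,
            Finset.Nat.sum_rev_add_one_of_mem_antidiagonalTuple hd]
      _ = _ := Finset.sum_nsmul _ _ _
  rw [map_sum, Finset.sum_apply, map_sum, ← Pi.smul_apply, ← hsum, Finset.sum_apply]
  exact Finset.sum_congr rfl fun i _ => hs.pi_apply_mkR hP hPS hπ _ k

end IsSq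

end Products

/-- For every `ω ∈ K^p(F)` (here `p := p'+1`), the images in
`S^{p+q}(F)` satisfy `s_q(λ)(ω) = ((p+q)/p) · s̃_q(λ)(ω)`. -/
theorem sq_eq_sqTilde_on_K [Algebra ℚ A]
    (lam : ∀ i, F →ₗ[A] RPow A F i)
    (P : ∀ (p : ℕ) (d : Fin (p + 1) → ℕ),
      MultilinearMap A (fun j : Fin (p + 1) => RPow A F (d j)) (∀ k, RPow A F k))
    (hP : IsMultiProdR A F P)
    (PS : ∀ (p : ℕ) (d : Fin p → ℕ),
      MultilinearMap A (fun j : Fin p => RPow A F (d j)) (∀ k, SymPow A F k))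
    (hPS : IsMultiProdS A F PS)
    (π : ∀ k, RPow A F k →ₗ[A] SymPow A F (k + 1)) (hπ : IsPi A F π)
    (p' q : ℕ)
    (s : RPow A F p' →ₗ[A] ∀ k, RPow A F k) (hs : IsSq A F P lam p' q s)
    (st : SymPow A F (p' + 1) →ₗ[A] ∀ k, SymPow A F k)
    (hst : IsSqTilde A F PS lam (p' + 1) q st) :
    ∀ ω ∈ KSub A F p', ∀ k : ℕ,
      π k (s ω k)
        = algebraMap ℚ A ((p' + 1 + q : ℚ) / (p' + 1 : ℚ)) • st (π p' ω) (k + 1) := by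
  intro ω hω k
  refine LinearMap.eqOn_span (R := A) (f := π k ∘ₗ LinearMap.proj k ∘ₗ s)
    (g := algebraMap ℚ A ((p' + 1 + q : ℚ) / (p' + 1 : ℚ)) •
      (LinearMap.proj (k + 1) ∘ₗ st ∘ₗ π p')) ?_ hω
  rintro _ ⟨m, rfl⟩
  have hscalar : algebraMap ℚ A ((p' + 1 + q : ℚ) / (p' + 1 : ℚ)) * (p' + 1 : ℕ)
      = (q + (p' + 1) : ℕ) := by
    rw [← map_natCast (algebraMap ℚ A), ← map_natCast (algebraMap ℚ A), ← map_mul]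
    congr 1
    push_cast
    field_simp
    ring
  simp only [LinearMap.coe_comp, Function.comp_apply, LinearMap.proj_apply, LinearMap.smul_apply]
  rw [mkR_add_sum_rot, hs.pi_apply_sum_rot hP hPS hπ, hπ.apply_sum_rot, map_nsmul, hst,
    Pi.smul_apply, ← Nat.cast_smul_eq_nsmul A, ← Nat.cast_smul_eq_nsmul A, smul_smul, hscalar]
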